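/- arXiv:1207.7175 — 3 statements merged into one kernel-verified Lean document; each statement's English description precedes it below -/
import Mathlib

section
/- Let n ≥ 2 and let λ ∈ ℂ with λ^(n+1) ≠ 1. Then the hypersurface X_λ in ℙ^n defined by F_λ = Σ_{i=1}^{n+1} x_i^{n+1} − (n+1)λ ∏_{j=1}^{n+1} x_j is smooth, i.e., the polynomial F_λ and its partial derivatives have no common zero in ℂ^{n+1} \ {0}. -/
/-!
At a singular point every partial derivative vanishes, which (after multiplying `∂F_λ/∂x_k`
by `x_k`) says `x_k^(n+1) = λ P` for every `k`, where `P = ∏ x_j`. Multiplying these `n + 1`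
equations gives `P^(n+1) = λ^(n+1) P^(n+1)`. If `P = 0` all coordinates vanish; otherwise
`λ^(n+1) = 1`.
-/

/-- The Dwork polynomial `F_λ = ∑ x_i^(n+1) - (n+1) λ ∏ x_j` evaluated at `x`. -/
noncomputable def dworkF (n : ℕ) (lam : ℂ) (x : Fin (n + 1) → ℂ) : ℂ :=
  (∑ i, x i ^ (n + 1)) - (n + 1) * lam * ∏ j, x j

/-- The partial derivative `∂F_λ/∂x_k = (n+1) x_k^n - (n+1) λ ∏_{j≠k} x_j` evaluated at `x`. -/
noncomputable def dworkPartial (n : ℕ) (lam : ℂ) (k : Fin (n + 1)) (x : Fin (n + 1) → ℂ) : ℂ :=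
  (n + 1) * x k ^ n - (n + 1) * lam * ∏ j ∈ Finset.univ.erase k, x j

open Finset

theorem pow_card_eq_one_of_pow_card_eq_mul_prod {ι R : Type*} [Fintype ι] [CommRing R]
    [IsDomain R] {x : ι → R} {c : R} (hx : x ≠ 0)
    (h : ∀ k, x k ^ Fintype.card ι = c * ∏ j, x j) :
    c ^ Fintype.card ι = 1 := by
  obtain ⟨k, hk⟩ := Function.ne_iff.mp hx
  have hprod : ∏ j, x j ≠ 0 := by
    intro h0
    have hxk := h k
    rw [h0, mul_zero] at hxk
    exact hk (eq_zero_of_pow_eq_zero hxk)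
  refine mul_right_cancel₀ (pow_ne_zero (Fintype.card ι) hprod) ?_
  calc c ^ Fintype.card ι * (∏ j, x j) ^ Fintype.card ι
      = ∏ _k : ι, c * ∏ j, x j := by rw [prod_const, card_univ, mul_pow]
    _ = ∏ k, x k ^ Fintype.card ι := prod_congr rfl fun k _ => (h k).symm
    _ = 1 * (∏ j, x j) ^ Fintype.card ι := by rw [prod_pow, one_mul]

theorem pow_succ_eq_of_dworkPartial_eq_zero {n : ℕ} {lam : ℂ} {k : Fin (n + 1)}
    {x : Fin (n + 1) → ℂ} (h : dworkPartial n lam k x = 0) :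
    x k ^ (n + 1) = lam * ∏ j, x j := by
  have hpow : x k ^ n = lam * ∏ j ∈ univ.erase k, x j := by
    apply mul_left_cancel₀ (Nat.cast_add_one_ne_zero (R := ℂ) n)
    unfold dworkPartial at h
    linear_combination h
  rw [pow_succ', hpow, mul_left_comm, mul_prod_erase _ _ (mem_univ k)]

theorem dwork_smooth_of_pow_ne_one_general (n : ℕ) (lam : ℂ)
    (hlam : lam ^ (n + 1) ≠ 1) :
    ∀ x : Fin (n + 1) → ℂ, x ≠ 0 →
      ¬(dworkF n lam x = 0 ∧ ∀ k : Fin (n + 1), dworkPartial n lam k x = 0) := by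
  rintro x hx ⟨-, hpartial⟩
  apply hlam
  simpa only [Fintype.card_fin] using pow_card_eq_one_of_pow_card_eq_mul_prod hx fun k => by
    rw [Fintype.card_fin]
    exact pow_succ_eq_of_dworkPartial_eq_zero (hpartial k)

/-- for `n ≥ 2` and `λ^(n+1) ≠ 1`, the Dwork hypersurface is smooth:
`F_λ` and its partial derivatives have no common zero in `ℂ^(n+1) \ {0}`. -/
theorem dwork_smooth_of_pow_ne_one (n : ℕ) (hn : 2 ≤ n) (lam : ℂ)
    (hlam : lam ^ (n + 1) ≠ 1) :
    ∀ x : Fin (n + 1) → ℂ, x ≠ 0 →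
      ¬(dworkF n lam x = 0 ∧ ∀ k : Fin (n + 1), dworkPartial n lam k x = 0) :=
  dwork_smooth_of_pow_ne_one_general n lam hlam
end

section
/- Let n ≥ 2 and let λ ∈ ℂ with λ^(n+1) = 1, say λ = ξ^r where ξ is a primitive (n+1)-th root of unity. Then the singular points of the hypersurface Z(F_λ) ⊂ ℙ^n are exactly the points (ξ^{i_1} : … : ξ^{i_n} : 1) with i_1 + … + i_n ≡ −r (mod n+1). In particular there are exactly (n+1)^{n−1} singular points. -/
/-- A point of `Z(F_λ)` (given by a vector of homogeneous coordinates) is singular iff all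
partial derivatives of `F_λ` vanish there (together with `F_λ` itself). -/
noncomputable def dworkSingular (n : ℕ) (lam : ℂ) (x : Fin (n + 1) → ℂ) : Prop :=
  dworkF n lam x = 0 ∧ ∀ k : Fin (n + 1), dworkPartial n lam k x = 0

/-!
By Euler's relation `∑ x_k ∂_k F_λ = (n+1) F_λ`, a point is singular as soon as all partials
vanish. If `x_m ≠ 0` but `x_k = 0`, then `∂_m F_λ = (n+1) x_m^n ≠ 0`, so singular points have no
zero coordinate, and then `x_k ∂_k F_λ = (n+1)(x_k^(n+1) - λ ∏ x_j)` shows they are the points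
with `x_k^(n+1) = λ ∏ x_j` for all `k`. With `x_(n+1) = 1` this says `x_k = ξ^(i_k)` and
`ξ^(r + ∑ i_k) = 1`. The constraint on `∑ i_k` determines one exponent from the other `n - 1`.
-/

theorem Fintype.card_subtype_sum_eq {G : Type*} [AddCommGroup G] [Fintype G] [DecidableEq G]
    (m : ℕ) (a : G) :
    Fintype.card {i : Fin (m + 1) → G // ∑ j, i j = a} = Fintype.card G ^ m := by
  let e : {i : Fin (m + 1) → G // ∑ j, i j = a} ≃ (Fin m → G) :=
    { toFun := fun i j => i.1 j.castSucc
      invFun := fun f => ⟨Fin.snoc f (a - ∑ j, f j), by simp [Fin.sum_univ_castSucc]⟩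
      left_inv := fun ⟨i, hi⟩ => by
        ext j
        refine Fin.lastCases ?_ (fun j => by simp) j
        rw [Fin.sum_univ_castSucc] at hi
        simp [← hi]
      right_inv := fun f => by simp }
  simp [Fintype.card_congr e]

section RootsOfUnity

variable {k : ℕ} [NeZero k]

theorem IsPrimitiveRoot.forall_pow_eq_one_iff_exists_zmod {R ι : Type*} [CommRing R] [IsDomain R]
    {ξ : R} (hξ : IsPrimitiveRoot ξ k) (y : ι → R) :
    (∀ j, y j ^ k = 1) ↔ ∃ i : ι → ZMod k, ∀ j, y j = ξ ^ (i j).val := by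
  constructor
  · intro hy
    choose e he_lt he using fun j => hξ.eq_pow_of_pow_eq_one (hy j)
    exact ⟨fun j => e j, fun j => by rw [ZMod.val_natCast_of_lt (he_lt j), he]⟩
  · rintro ⟨i, hi⟩ j
    rw [hi, ← pow_mul, mul_comm, pow_mul, hξ.pow_eq_one, one_pow]

theorem IsPrimitiveRoot.pow_mul_prod_pow_val_eq_one_iff {M ι : Type*} [CommMonoid M] [Fintype ι]
    {ξ : M} (hξ : IsPrimitiveRoot ξ k) (r : ℕ) (i : ι → ZMod k) :
    ξ ^ r * ∏ j, ξ ^ (i j).val = 1 ↔ ∑ j, i j = -(r : ZMod k) := by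
  rw [Finset.prod_pow_eq_pow_sum, ← pow_add, hξ.pow_eq_one_iff_dvd,
    ← ZMod.natCast_eq_zero_iff, eq_neg_iff_add_eq_zero, add_comm]
  simp

theorem IsPrimitiveRoot.forall_pow_eq_one_and_pow_mul_prod_eq_one_iff {R ι : Type*} [CommRing R]
    [IsDomain R] [Fintype ι] {ξ : R} (hξ : IsPrimitiveRoot ξ k) (r : ℕ) (y : ι → R) :
    ((∀ j, y j ^ k = 1) ∧ ξ ^ r * ∏ j, y j = 1) ↔
      ∃ i : ι → ZMod k, ∑ j, i j = -(r : ZMod k) ∧ ∀ j, y j = ξ ^ (i j).val := by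
  rw [hξ.forall_pow_eq_one_iff_exists_zmod]
  constructor
  · rintro ⟨⟨i, hi⟩, hprod⟩
    obtain rfl := funext hi
    exact ⟨i, (hξ.pow_mul_prod_pow_val_eq_one_iff r i).mp hprod, fun _ => rfl⟩
  · rintro ⟨i, hsum, hi⟩
    obtain rfl := funext hi
    exact ⟨⟨i, fun _ => rfl⟩, (hξ.pow_mul_prod_pow_val_eq_one_iff r i).mpr hsum⟩

end RootsOfUnity

section Dwork

variable {n : ℕ} {lam : ℂ} {x : Fin (n + 1) → ℂ}

theorem mul_dworkPartial (k : Fin (n + 1)) :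
    x k * dworkPartial n lam k x = (n + 1) * (x k ^ (n + 1) - lam * ∏ j, x j) := by
  rw [dworkPartial, ← Finset.mul_prod_erase Finset.univ x (Finset.mem_univ k)]
  ring

theorem sum_mul_dworkPartial :
    ∑ k, x k * dworkPartial n lam k x = (n + 1) * dworkF n lam x := by
  simp only [mul_dworkPartial, ← Finset.mul_sum, Finset.sum_sub_distrib, Finset.sum_const,
    Finset.card_univ, Fintype.card_fin, nsmul_eq_mul, dworkF]
  push_cast
  ring

theorem dworkSingular_iff_forall_dworkPartial_eq_zero :
    dworkSingular n lam x ↔ ∀ k, dworkPartial n lam k x = 0 := by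
  refine ⟨And.right, fun h => ⟨?_, h⟩⟩
  have hEuler := (sum_mul_dworkPartial (lam := lam) (x := x)).symm
  simpa [h, Nat.cast_add_one_ne_zero] using hEuler

theorem dworkPartial_ne_zero_of_eq_zero (hn : n ≠ 0) {k m : Fin (n + 1)} (hm : x m ≠ 0)
    (hk : x k = 0) : dworkPartial n lam m x ≠ 0 := by
  have hkm : k ≠ m := by rintro rfl; exact hm hk
  have hprod : ∏ j ∈ Finset.univ.erase m, x j = 0 :=
    Finset.prod_eq_zero (Finset.mem_erase.mpr ⟨hkm, Finset.mem_univ k⟩) hk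
  simp [dworkPartial, hprod, hm, hn, Nat.cast_add_one_ne_zero]

theorem dworkSingular.forall_ne_zero (hn : n ≠ 0) (hs : dworkSingular n lam x)
    {m : Fin (n + 1)} (hm : x m ≠ 0) (k : Fin (n + 1)) : x k ≠ 0 :=
  fun hk => dworkPartial_ne_zero_of_eq_zero hn hm hk (hs.2 m)

theorem dworkSingular_iff_forall_pow_eq (hx : ∀ k, x k ≠ 0) :
    dworkSingular n lam x ↔ ∀ k, x k ^ (n + 1) = lam * ∏ j, x j := by
  rw [dworkSingular_iff_forall_dworkPartial_eq_zero]
  refine forall_congr' fun k => ?_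
  rw [← mul_eq_zero_iff_left (hx k), mul_dworkPartial, mul_eq_zero_iff_left
    (Nat.cast_add_one_ne_zero n), sub_eq_zero]

theorem dworkSingular_iff_of_last_eq_one (hn : n ≠ 0) (hx : x (Fin.last n) = 1) :
    dworkSingular n lam x ↔
      (∀ j : Fin n, x j.castSucc ^ (n + 1) = 1) ∧ lam * ∏ j : Fin n, x j.castSucc = 1 := by
  have hprod : ∏ j, x j = ∏ j : Fin n, x j.castSucc := by
    rw [Fin.prod_univ_castSucc, hx, mul_one]
  constructor
  · intro hs
    have hne := hs.forall_ne_zero hn (hx ▸ one_ne_zero)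
    have hpow := (dworkSingular_iff_forall_pow_eq hne).mp hs
    have hlam : lam * ∏ j, x j = 1 := by rw [← hpow, hx, one_pow]
    exact ⟨fun j => (hpow _).trans hlam, hprod ▸ hlam⟩
  · rintro ⟨hpow, hlam⟩
    have hpow' : ∀ k, x k ^ (n + 1) = 1 := Fin.lastCases (by rw [hx, one_pow]) hpow
    have hne : ∀ k, x k ≠ 0 := fun k => left_ne_zero_of_mul_eq_one <|
      (pow_succ' (x k) n).symm.trans (hpow' k)
    rw [dworkSingular_iff_forall_pow_eq hne, hprod, hlam]
    exact hpow'

end Dwork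

/-- for `λ = ξ^r` with `ξ` a primitive `(n+1)`-th root of unity, the singular
points of `Z(F_λ) ⊂ ℙ^n` are exactly the points `(ξ^{i_1} : … : ξ^{i_n} : 1)` with
`i_1 + … + i_n ≡ -r (mod n+1)`; in particular there are exactly `(n+1)^(n-1)` of them. -/
theorem dwork_singular_points (n : ℕ) (hn : 2 ≤ n) (ξ : ℂ)
    (hξ : IsPrimitiveRoot ξ (n + 1)) (r : ℕ) (lam : ℂ) (hlam : lam = ξ ^ r) :
    (∀ x : Fin (n + 1) → ℂ, x ≠ 0 → dworkSingular n lam x → x (Fin.last n) ≠ 0) ∧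
    (∀ x : Fin (n + 1) → ℂ, x (Fin.last n) = 1 →
      (dworkSingular n lam x ↔
        ∃ i : Fin n → ZMod (n + 1), (∑ j, i j) = -(r : ZMod (n + 1)) ∧
          ∀ j : Fin n, x j.castSucc = ξ ^ (i j).val)) ∧
    Fintype.card {i : Fin n → ZMod (n + 1) // (∑ j, i j) = -(r : ZMod (n + 1))} =
      (n + 1) ^ (n - 1) := by
  subst hlam
  have hn0 : n ≠ 0 := by omega
  refine ⟨fun x hx hs => ?_, fun x hx => ?_, ?_⟩
  · obtain ⟨m, hm⟩ := Function.ne_iff.mp hx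
    exact hs.forall_ne_zero hn0 hm _
  · rw [dworkSingular_iff_of_last_eq_one hn0 hx]
    exact hξ.forall_pow_eq_one_and_pow_mul_prod_eq_one_iff r _
  · obtain ⟨m, rfl⟩ := Nat.exists_eq_add_one.mpr (Nat.pos_of_ne_zero hn0)
    simpa using Fintype.card_subtype_sum_eq m (-(r : ZMod (m + 1 + 1)))
end

section
/- Let k ≥ 3 and λ ∈ ℂ. The map sending [y_1 : … : y_k : y_{k+1}] to ([y_1 : … : y_k], [y_{k+1} : y_1+…+y_k]) defines a bijection between the open subset of the hypersurface Y = {(Σ_{i=1}^{k+1} y_i)^{k+1} = (k+1)^{k+1} λ^{k+1} ∏_{i=1}^{k+1} y_i} ⊂ ℙ^k where y_{k+1} ≠ 0 or y_1+…+y_k ≠ 0, minus the locus {y_1+…+y_k = 0}, and the open subset of I = {([y_1:…:y_k],[a:b]) ∈ ℙ^{k−1}×ℙ^1 : (y_1+…+y_k)^k (b+a)^{k+1} = (k+1)^{k+1} λ^{k+1} a b^k y_1⋯y_k} where b ≠ 0, with inverse ([y_1:…:y_k],[a:b]) ↦ [y_1 : … : y_k : (a/b)(y_1+…+y_k)]. 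-/
/-!
Writing a point of `ℙ^k` as `(z, t)` with `z = (y_1, …, y_k)` and `S = y_1 + … + y_k`, the equation
of `Y` reads `(S + t)^{k+1} = (k+1)^{k+1} λ^{k+1} (∏ z) t`. Multiplying by `S^k` gives the equation
of `I` at `[a : b] = [t : S]`; conversely, at `t = (a/b) S` one has `S + t = S (b + a) / b`, so the
equation of `I` divided by `b^{k+1}` is that of `Y`. The two maps are inverse since
`(a/b) S = (S/b) a` and `S = (S/b) b`.
-/

/-- Equation of `Y = {(∑ y_i)^{k+1} = (k+1)^{k+1} λ^{k+1} ∏ y_i} ⊂ ℙ^k`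
in homogeneous coordinates. -/
def eqY (k : ℕ) (lam : ℂ) (y : Fin (k + 1) → ℂ) : Prop :=
  (∑ i, y i) ^ (k + 1) = (k + 1) ^ (k + 1) * lam ^ (k + 1) * ∏ i, y i

/-- Equation of `I ⊂ ℙ^{k-1} × ℙ^1`:
`(y_1+…+y_k)^k (b+a)^{k+1} = (k+1)^{k+1} λ^{k+1} a b^k y_1⋯y_k`. -/
def eqI (k : ℕ) (lam : ℂ) (z : Fin k → ℂ) (a b : ℂ) : Prop :=
  (∑ i, z i) ^ k * (b + a) ^ (k + 1) = (k + 1) ^ (k + 1) * lam ^ (k + 1) * a * b ^ k * ∏ i, z i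

section

variable {k : ℕ} (lam : ℂ)

theorem eqY_snoc_iff (z : Fin k → ℂ) (t : ℂ) :
    eqY k lam (Fin.snoc z t) ↔
      (∑ i, z i + t) ^ (k + 1) = (k + 1) ^ (k + 1) * lam ^ (k + 1) * (∏ i, z i) * t := by
  simp only [eqY, Fin.sum_univ_castSucc, Fin.prod_univ_castSucc, Fin.snoc_castSucc,
    Fin.snoc_last, mul_assoc]

theorem eqI_of_eqY_snoc {z : Fin k → ℂ} {t : ℂ} (h : eqY k lam (Fin.snoc z t)) :
    eqI k lam z t (∑ i, z i) := by
  rw [eqY_snoc_iff] at h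
  unfold eqI
  linear_combination (∑ i, z i) ^ k * h

theorem eqY_snoc_of_eqI {z : Fin k → ℂ} {a b : ℂ} (hb : b ≠ 0) (h : eqI k lam z a b) :
    eqY k lam (Fin.snoc z (a / b * ∑ i, z i)) := by
  rw [eqY_snoc_iff]
  unfold eqI at h
  have hsum : ∑ i, z i + a / b * ∑ i, z i = (∑ i, z i) * (b + a) / b := by
    field_simp
  rw [hsum, div_pow, mul_pow]
  field_simp
  linear_combination b * (∑ i, z i) * h

end

theorem dwork_quotient_fibration_birational_general (k : ℕ) (lam : ℂ) :
    (∀ y : Fin (k + 1) → ℂ, y ≠ 0 → eqY k lam y → (∑ i : Fin k, y i.castSucc) ≠ 0 →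
      eqI k lam (fun i => y i.castSucc) (y (Fin.last k)) (∑ i : Fin k, y i.castSucc)) ∧
    (∀ (z : Fin k → ℂ) (a b : ℂ), z ≠ 0 → b ≠ 0 → eqI k lam z a b →
      eqY k lam (Fin.snoc z (a / b * ∑ i, z i))) ∧
    (∀ y : Fin (k + 1) → ℂ, eqY k lam y → (∑ i : Fin k, y i.castSucc) ≠ 0 →
      Fin.snoc (fun i : Fin k => y i.castSucc)
        (y (Fin.last k) / (∑ i : Fin k, y i.castSucc) * ∑ i : Fin k, y i.castSucc) = y) ∧
    (∀ (z : Fin k → ℂ) (a b : ℂ), b ≠ 0 → (∑ i, z i) ≠ 0 →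
      ((fun i : Fin k => (Fin.snoc z (a / b * ∑ i, z i) : Fin (k + 1) → ℂ) i.castSucc) = z ∧
        ∃ c : ℂ, c ≠ 0 ∧
          (Fin.snoc z (a / b * ∑ i, z i) : Fin (k + 1) → ℂ) (Fin.last k) = c * a ∧
          (∑ i : Fin k,
            (Fin.snoc z (a / b * ∑ i, z i) : Fin (k + 1) → ℂ) i.castSucc) = c * b)) := by
  refine ⟨fun y _ hY _ => ?_, fun z a b _ hb hI => eqY_snoc_of_eqI lam hb hI,
    fun y _ hS => ?_, fun z a b hb hS => ?_⟩
  · rw [← Fin.snoc_init_self y] at hY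
    exact eqI_of_eqY_snoc lam hY
  · rw [div_mul_cancel₀ _ hS]
    exact Fin.snoc_init_self y
  · refine ⟨funext fun i => Fin.snoc_castSucc _ _ i, (∑ i, z i) / b, div_ne_zero hS hb, ?_, ?_⟩
    · rw [Fin.snoc_last]
      ring
    · simp only [Fin.snoc_castSucc]
      field_simp

/-- the map `[y_1:…:y_{k+1}] ↦ ([y_1:…:y_k],[y_{k+1} : y_1+…+y_k])` gives a
bijection between the open part of `Y` where `y_1+…+y_k ≠ 0` and the open part of `I` where
`b ≠ 0`, with inverse `([y_1:…:y_k],[a:b]) ↦ [y_1:…:y_k:(a/b)(y_1+…+y_k)]`: the two maps are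
well defined and mutually inverse (up to the projective scaling on the `ℙ^1` factor). -/
theorem dwork_quotient_fibration_birational (k : ℕ) (hk : 3 ≤ k) (lam : ℂ) :
    (∀ y : Fin (k + 1) → ℂ, y ≠ 0 → eqY k lam y → (∑ i : Fin k, y i.castSucc) ≠ 0 →
      eqI k lam (fun i => y i.castSucc) (y (Fin.last k)) (∑ i : Fin k, y i.castSucc)) ∧
    (∀ (z : Fin k → ℂ) (a b : ℂ), z ≠ 0 → b ≠ 0 → eqI k lam z a b →
      eqY k lam (Fin.snoc z (a / b * ∑ i, z i))) ∧
    (∀ y : Fin (k + 1) → ℂ, eqY k lam y → (∑ i : Fin k, y i.castSucc) ≠ 0 →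
      Fin.snoc (fun i : Fin k => y i.castSucc)
        (y (Fin.last k) / (∑ i : Fin k, y i.castSucc) * ∑ i : Fin k, y i.castSucc) = y) ∧
    (∀ (z : Fin k → ℂ) (a b : ℂ), b ≠ 0 → (∑ i, z i) ≠ 0 →
      ((fun i : Fin k => (Fin.snoc z (a / b * ∑ i, z i) : Fin (k + 1) → ℂ) i.castSucc) = z ∧
        ∃ c : ℂ, c ≠ 0 ∧
          (Fin.snoc z (a / b * ∑ i, z i) : Fin (k + 1) → ℂ) (Fin.last k) = c * a ∧
          (∑ i : Fin k,
            (Fin.snoc z (a / b * ∑ i, z i) : Fin (k + 1) → ℂ) i.castSucc) = c * b)) :=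
  dwork_quotient_fibration_birational_general k lam
end
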